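/- arXiv:2506.20484 — 5 statements merged into one kernel-verified Lean document; each statement's English description precedes it below -/
import Mathlib

section
/- Suppose ξ(z) and τ(z) are polynomial vectors of degree at most n (with values in ℂ^K), and v(z) is a vector-valued function on the unit circle, square-integrable, whose Fourier coefficients (v_k)_{k∈ℤ} satisfy ⟨ξ_k, ξ_h⟩ − ⟨τ_k, τ_h⟩ = ⟨v_k, v_h⟩ − ⟨v_{k−1}, v_{h−1}⟩ for all k, h ∈ ℤ, where ξ_k, τ_k denote the coefficients of ξ, τ (zero outside {0,…,n}). Then v_k = 0 for all k < 0 and all k ≥ n; that is, v is a polynomial of degree at most n − 1. -/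
local notation "⟪" x ", " y "⟫" => @inner ℂ _ _ x y

/-- If `ξ, τ` are `ℂ^K`-valued polynomial vectors of degree at most `n` (coefficients supported
on `{0,…,n}`) and `v` is a square-summable family of Hilbert-space vectors (the Fourier
coefficients of a square-integrable function) satisfying the adversary-bound constraint
`⟪ξ_k, ξ_h⟫ − ⟪τ_k, τ_h⟫ = ⟪v_k, v_h⟫ − ⟪v_{k−1}, v_{h−1}⟫` for all `k, h ∈ ℤ`, then
`v_k = 0` for `k < 0` and for `k ≥ n`, i.e. `v` is a polynomial of degree at most `n − 1`. -/
theorem catalyst_degree_bound_univariate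
    {H : Type*} [NormedAddCommGroup H] [InnerProductSpace ℂ H]
    (K n : ℕ)
    (ξ τ : ℤ → EuclideanSpace ℂ (Fin K))
    (hξ : ∀ k : ℤ, k < 0 ∨ (n : ℤ) < k → ξ k = 0)
    (hτ : ∀ k : ℤ, k < 0 ∨ (n : ℤ) < k → τ k = 0)
    (v : ℤ → H) (hsum : Summable fun k => ‖v k‖ ^ 2)
    (hrel : ∀ k h : ℤ,
      ⟪ξ k, ξ h⟫ - ⟪τ k, τ h⟫ = ⟪v k, v h⟫ - ⟪v (k - 1), v (h - 1)⟫) :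
    ∀ k : ℤ, k < 0 ∨ (n : ℤ) ≤ k → v k = 0 := by
  set g : ℤ → ℝ := fun k => ‖v k‖ ^ 2 with hg
  -- key step: outside the support, norms are constant
  have key : ∀ k : ℤ, k < 0 ∨ (n : ℤ) < k → g (k - 1) = g k := by
    intro k hk
    have h1 := hrel k k
    rw [hξ k hk, hτ k hk] at h1
    simp only [inner_zero_left, sub_zero, sub_self] at h1
    have h2 : (⟪v (k-1), v (k-1)⟫ : ℂ) = ⟪v k, v k⟫ := (sub_eq_zero.mp h1.symm).symm
    rw [inner_self_eq_norm_sq_to_K, inner_self_eq_norm_sq_to_K] at h2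
    have := congrArg Complex.re h2
    simpa [g, ← Complex.ofReal_pow] using this
  -- constancy on the left tail
  have claimA : ∀ m : ℕ, g (-1 - m) = g (-1) := by
    intro m
    induction m with
    | zero => simp
    | succ m ih =>
      have : (-1 - (m+1 : ℕ) : ℤ) = (-1 - m) - 1 := by push_cast; ring
      rw [this, key (-1 - m) (Or.inl (by omega)), ih]
  -- constancy on the right tail
  have claimB : ∀ m : ℕ, g ((n : ℤ) + m) = g n := by
    intro m
    induction m with
    | zero => simp
    | succ m ih =>
      have h1 : ((n : ℤ) + m) = ((n : ℤ) + (m+1 : ℕ)) - 1 := by push_cast; ring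
      have := key ((n : ℤ) + (m+1 : ℕ)) (Or.inr (by push_cast; omega))
      rw [← h1] at this
      rw [← this, ih]
  -- summability forces the tails to vanish
  have htend : Filter.Tendsto g Filter.cofinite (nhds 0) := hsum.tendsto_cofinite_zero
  have tail_zero : ∀ (e : ℕ → ℤ), Function.Injective e → (∀ m, g (e m) = g (e 0)) →
      g (e 0) = 0 := by
    intro e he hconst
    have h1 : Filter.Tendsto (fun m => g (e m)) Filter.atTop (nhds 0) := by
      have := htend.comp (he.tendsto_cofinite)
      rw [Nat.cofinite_eq_atTop] at this
      exact this
    have h2 : Filter.Tendsto (fun _ : ℕ => g (e 0)) Filter.atTop (nhds 0) := by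
      refine h1.congr ?_
      intro m; exact hconst m
    exact tendsto_nhds_unique tendsto_const_nhds h2
  have hA : g (-1) = 0 := by
    refine tail_zero (fun m => -1 - m) (fun a b hab => by simpa using hab) ?_
    intro m; simpa using claimA m
  have hB : g (n : ℤ) = 0 := by
    refine tail_zero (fun m => (n : ℤ) + m) (fun a b hab => by simpa using hab) ?_
    intro m; simpa using claimB m
  intro k hk
  have hgk : g k = 0 := by
    rcases hk with hk | hk
    · have : k = -1 - ((-1 - k).toNat : ℤ) := by omega
      rw [this, claimA, hA]
    · have : k = (n : ℤ) + ((k - n).toNat : ℤ) := by omega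
      rw [this, claimB, hB]
  have : ‖v k‖ = 0 := by
    have := hgk
    simp only [g] at this
    nlinarith [norm_nonneg (v k)]
  exact norm_eq_zero.mp this
end

section
/- Let A(O) = U_T Õ U_{T−1} Õ ⋯ Õ U_0 be a quantum query algorithm with unitary oracles O_x, and suppose A(O_x) ξ_x = τ_x ⊕ σ_x for all x in a finite set D (with ‖ξ_x‖² = ‖τ_x‖² + ‖σ_x‖²). Define γ_x^k = U_k Õ_x ⋯ Õ_x U_0 ξ_x. Then for all x, y ∈ D: ⟨ξ_x, ξ_y⟩ − ⟨τ_x, τ_y⟩ − ⟨σ_x, σ_y⟩ = Σ_{k=0}^{T−1} ⟨γ_x^k, (Id − Õ_x* Õ_y) γ_y^k⟩; in particular the direct sum v_x = γ_x^0 ⊕ ⋯ ⊕ γ_x^{T−1} is a feasible catalyst with ‖v_x‖² = T. -/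
local notation "⟪" x ", " y "⟫" => @inner ℂ _ _ x y

/-- For a quantum query algorithm `A(O_x) = U_T Õ_x U_{T−1} ⋯ Õ_x U_0` converting `ξ_x` into
`τ_x ⊕ σ_x` (with `τ` and `σ` in fixed mutually-orthogonal subspaces), the intermediate
states `γ_x^k = U_k Õ_x ⋯ Õ_x U_0 ξ_x` satisfy the telescoping identity
`⟪ξ_x, ξ_y⟫ − ⟪τ_x, τ_y⟫ − ⟪σ_x, σ_y⟫ = Σ_{k<T} (⟪γ_x^k, γ_y^k⟫ − ⟪Õ_x γ_x^k, Õ_y γ_y^k⟫)`,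
so `v_x = γ_x^0 ⊕ ⋯ ⊕ γ_x^{T−1}` is a feasible catalyst, with `‖v_x‖² = Σ_{k<T} ‖γ_x^k‖² = T`
whenever `‖ξ_x‖ = 1`. -/
theorem query_algorithm_gives_catalyst
    {D H : Type*} [NormedAddCommGroup H] [InnerProductSpace ℂ H]
    (T : ℕ)
    (U : ℕ → (H ≃ₗᵢ[ℂ] H))
    (O : D → (H ≃ₗᵢ[ℂ] H))
    (ξ τ σ : D → H)
    (γ : D → ℕ → H)
    (hγ0 : ∀ x, γ x 0 = U 0 (ξ x))
    (hγstep : ∀ x k, γ x (k + 1) = U (k + 1) (O x (γ x k)))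
    (hortho : ∀ x y : D, ⟪τ x, σ y⟫ = 0)
    (hfinal : ∀ x, γ x T = τ x + σ x) :
    (∀ x y : D,
      ⟪ξ x, ξ y⟫ - ⟪τ x, τ y⟫ - ⟪σ x, σ y⟫
        = ∑ k ∈ Finset.range T, (⟪γ x k, γ y k⟫ - ⟪O x (γ x k), O y (γ y k)⟫)) ∧
    (∀ x : D, ‖ξ x‖ = 1 → ∑ k ∈ Finset.range T, ‖γ x k‖ ^ 2 = T) := by
  constructor
  · intro x y
    have hterm : ∀ k, (⟪γ x k, γ y k⟫ - ⟪O x (γ x k), O y (γ y k)⟫)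
        = ⟪γ x k, γ y k⟫ - ⟪γ x (k+1), γ y (k+1)⟫ := by
      intro k
      rw [hγstep, hγstep, LinearIsometryEquiv.inner_map_map]
    have htel : ∑ k ∈ Finset.range T, (⟪γ x k, γ y k⟫ - ⟪O x (γ x k), O y (γ y k)⟫)
        = ⟪γ x 0, γ y 0⟫ - ⟪γ x T, γ y T⟫ := by
      simp_rw [hterm]
      exact Finset.sum_range_sub' (fun k => ⟪γ x k, γ y k⟫) T
    rw [htel, hγ0, hγ0, LinearIsometryEquiv.inner_map_map, hfinal, hfinal]
    have h1 : ⟪σ x, τ y⟫ = 0 := by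
      rw [← inner_conj_symm, hortho, map_zero]
    rw [inner_add_left, inner_add_right, inner_add_right, hortho, h1]
    ring
  · intro x hx
    have hnorm : ∀ k, ‖γ x k‖ = 1 := by
      intro k
      induction k with
      | zero => rw [hγ0, LinearIsometryEquiv.norm_map, hx]
      | succ n ih => rw [hγstep, LinearIsometryEquiv.norm_map, LinearIsometryEquiv.norm_map, ih]
    simp [hnorm]
end

section
/- Fejér–Riesz (existence of a complementary polynomial): let P(z) be a complex polynomial of degree at most n with |P(z)| ≤ 1 for all z on the unit circle. Then there exists a complex polynomial Q(z) of degree at most n such that |P(z)|² + |Q(z)|² = 1 for all z on the unit circle. -/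
open Polynomial Complex Finset Topology Filter


noncomputable def starpoly (m : ℕ) (p : Polynomial ℂ) : Polynomial ℂ :=
  ∑ i ∈ Finset.range (m+1), Polynomial.C ((starRingEnd ℂ) (p.coeff i)) * Polynomial.X ^ (m - i)

lemma starpoly_natDegree_le (m : ℕ) (p : Polynomial ℂ) : (starpoly m p).natDegree ≤ m := by
  refine (Polynomial.natDegree_sum_le _ _).trans ?_
  simp only [Finset.fold_max_le]
  refine ⟨Nat.zero_le _, fun i hi => ?_⟩
  exact (Polynomial.natDegree_C_mul_le _ _).trans <| by
    simpa using Nat.sub_le m i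

lemma conj_eq_inv {z : ℂ} (hz : ‖z‖ = 1) : (starRingEnd ℂ) z = z⁻¹ := by
  have h : z * (starRingEnd ℂ) z = 1 := by
    rw [Complex.mul_conj]
    norm_cast
    rw [← Complex.sq_norm, hz]; norm_num
  exact eq_inv_of_mul_eq_one_right h

lemma starpoly_eval_circle {m : ℕ} {p : Polynomial ℂ} (hm : p.natDegree ≤ m)
    {z : ℂ} (hz : ‖z‖ = 1) :
    (starpoly m p).eval z = z ^ m * (starRingEnd ℂ) (p.eval z) := by
  have hz0 : z ≠ 0 := by intro h; simp [h] at hz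
  rw [Polynomial.eval_eq_sum_range' (Nat.lt_succ_of_le hm), map_sum, Finset.mul_sum]
  rw [starpoly, Polynomial.eval_finset_sum]
  refine Finset.sum_congr rfl fun i hi => ?_
  rw [Finset.mem_range, Nat.lt_succ_iff] at hi
  rw [Polynomial.eval_mul, Polynomial.eval_C, Polynomial.eval_pow, Polynomial.eval_X]
  rw [map_mul, map_pow, conj_eq_inv hz]
  field_simp
  rw [one_div, inv_pow, pow_sub₀ _ hz0 hi, mul_assoc]

lemma starpoly_root {m : ℕ} {p : Polynomial ℂ} (hm : p.natDegree ≤ m)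
    {r : ℂ} (hr : r ≠ 0) (h0 : p.eval r = 0) :
    (starpoly m p).eval (((starRingEnd ℂ) r)⁻¹) = 0 := by
  set s : ℂ := ((starRingEnd ℂ) r)⁻¹ with hs
  have hsc : (starRingEnd ℂ) s = r⁻¹ := by
    rw [hs, map_inv₀, Complex.conj_conj]
  have hs0 : s ≠ 0 := by
    simp [hs, hr]
  rw [starpoly, Polynomial.eval_finset_sum]
  have : ∀ i ∈ Finset.range (m+1),
      Polynomial.eval s (Polynomial.C ((starRingEnd ℂ) (p.coeff i)) * Polynomial.X ^ (m - i))
      = (starRingEnd ℂ) (p.coeff i * ((starRingEnd ℂ) s) ^ (m - i)) := by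
    intro i hi
    simp [map_mul, map_pow, Complex.conj_conj]
  rw [Finset.sum_congr rfl this, ← map_sum]
  have hzero : ∑ i ∈ Finset.range (m+1), p.coeff i * ((starRingEnd ℂ) s) ^ (m - i) = 0 := by
    rw [hsc]
    have hr' : ∀ i ∈ Finset.range (m+1), p.coeff i * (r⁻¹) ^ (m - i)
        = (r⁻¹) ^ m * (p.coeff i * r ^ i) := by
      intro i hi
      rw [Finset.mem_range, Nat.lt_succ_iff] at hi
      field_simp
      rw [one_div, inv_pow, inv_pow, pow_sub₀ _ hr hi, mul_inv, inv_inv, mul_assoc]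
    rw [Finset.sum_congr rfl hr', ← Finset.mul_sum]
    have := Polynomial.eval_eq_sum_range' (Nat.lt_succ_of_le hm) r
    rw [← this, h0, mul_zero]
  rw [hzero, map_zero]

lemma circle_infinite : Set.Infinite {z : ℂ | ‖z‖ = 1} := by
  have hinj : Set.InjOn (fun θ : ℝ => Complex.exp (θ * Complex.I)) (Set.Ioo 0 1) := by
    intro a ha b hb hab
    rw [Complex.exp_eq_exp_iff_exists_int] at hab
    obtain ⟨k, hk⟩ := hab
    have : (a : ℂ) = b + k * (2 * Real.pi) := by
      have h2 : ((a : ℂ) - (b + k * (2 * Real.pi))) * Complex.I = 0 := by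
        linear_combination hk
      rcases mul_eq_zero.mp h2 with h3 | h3
      · linear_combination h3
      · exact absurd h3 Complex.I_ne_zero
    have hre : a = b + k * (2 * Real.pi) := by exact_mod_cast this
    have hk0 : k = 0 := by
      by_contra hkne
      have hpi := Real.pi_gt_three
      rcases lt_or_gt_of_ne hkne with hneg | hpos
      · have : (k : ℝ) ≤ -1 := by exact_mod_cast (by omega : k ≤ -1)
        nlinarith [ha.1, ha.2, hb.1, hb.2]
      · have : (1 : ℝ) ≤ (k : ℝ) := by exact_mod_cast hpos
        nlinarith [ha.1, ha.2, hb.1, hb.2]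
    rw [hk0] at hre; simpa using hre
  have himg : (fun θ : ℝ => Complex.exp (θ * Complex.I)) '' (Set.Ioo 0 1) ⊆ {z : ℂ | ‖z‖ = 1} := by
    rintro z ⟨θ, hθ, rfl⟩
    simpa using Complex.norm_exp_ofReal_mul_I θ
  exact Set.Infinite.mono himg ((Set.Ioo_infinite (by norm_num)).image hinj)


-- path on circle
lemma path_circle (r : ℂ) (hr : ‖r‖ = 1) (θ : ℝ) :
    ‖r * Complex.exp (θ * Complex.I)‖ = 1 := by
  rw [norm_mul, hr, Complex.norm_exp_ofReal_mul_I, one_mul]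

lemma exp_factor (θ : ℝ) :
    Complex.exp (θ * Complex.I) - 1
      = Complex.exp ((θ/2 : ℝ) * Complex.I) * ((Real.sin (θ/2) : ℂ) * (2 * Complex.I)) := by
  have hconj : (starRingEnd ℂ) (Complex.exp ((θ/2 : ℝ) * Complex.I))
      = Complex.exp (-((θ/2 : ℝ) * Complex.I)) := by
    rw [← Complex.exp_conj]
    rw [map_mul, Complex.conj_ofReal, Complex.conj_I]
    ring
  have hsub := Complex.sub_conj (Complex.exp ((θ/2 : ℝ) * Complex.I))
  rw [hconj] at hsub
  have him : (Complex.exp ((θ/2 : ℝ) * Complex.I)).im = Real.sin (θ/2) :=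
    Complex.exp_ofReal_mul_I_im _
  rw [him] at hsub
  have hmul : Complex.exp ((θ/2 : ℝ) * Complex.I) * Complex.exp ((θ/2 : ℝ) * Complex.I)
      = Complex.exp (θ * Complex.I) := by
    rw [← Complex.exp_add]
    congr 1
    push_cast
    ring
  have hinv : Complex.exp ((θ/2 : ℝ) * Complex.I) * Complex.exp (-((θ/2 : ℝ) * Complex.I)) = 1 := by
    rw [← Complex.exp_add]
    simp
  calc Complex.exp (θ * Complex.I) - 1
      = Complex.exp ((θ/2 : ℝ) * Complex.I) * (Complex.exp ((θ/2 : ℝ) * Complex.I)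
          - Complex.exp (-((θ/2 : ℝ) * Complex.I))) := by
        rw [mul_sub, hmul, hinv]
    _ = _ := by rw [hsub]; push_cast; ring

lemma closed_nonnegR : IsClosed {w : ℂ | w.im = 0 ∧ 0 ≤ w.re} :=
  (isClosed_eq Complex.continuous_im continuous_const).inter
    (isClosed_le continuous_const Complex.continuous_re)

lemma closed_nonposR : IsClosed {w : ℂ | w.im = 0 ∧ w.re ≤ 0} :=
  (isClosed_eq Complex.continuous_im continuous_const).inter
    (isClosed_le Complex.continuous_re continuous_const)

lemma cont_path : Continuous (fun θ : ℝ => Complex.exp (θ * Complex.I)) :=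
  Complex.continuous_exp.comp (Complex.continuous_ofReal.mul continuous_const)

lemma path_ne (r : ℂ) {θ : ℝ} (hθ : θ ∈ Set.Ioo (0:ℝ) Real.pi) (hr0 : r ≠ 0) :
    r * Complex.exp (θ * Complex.I) ≠ r := by
  intro h
  have h1 : Complex.exp (θ * Complex.I) = 1 := by
    field_simp at h
    tauto
  rw [Complex.exp_eq_one_iff] at h1
  obtain ⟨k, hk⟩ := h1
  have h2 : (θ : ℂ) = (k : ℝ) * (2 * Real.pi) := by
    have h3 : ((θ : ℂ) - (k:ℝ) * (2*Real.pi)) * Complex.I = 0 := by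
      push_cast
      linear_combination hk
    rcases mul_eq_zero.mp h3 with h4 | h4
    · linear_combination h4
    · exact absurd h4 Complex.I_ne_zero
  have h4 : θ = (k : ℝ) * (2 * Real.pi) := by exact_mod_cast h2
  have hpi := Real.pi_pos
  rcases lt_trichotomy (k:ℝ) 0 with hn | hz | hp
  · have hk0 : k < 0 := by exact_mod_cast hn
    have : (k:ℝ) ≤ -1 := by exact_mod_cast (by omega : k ≤ -1)
    nlinarith [hθ.1, hθ.2]
  · rw [hz] at h4; simp at h4; linarith [hθ.1]
  · have : (1:ℝ) ≤ (k:ℝ) := by exact_mod_cast (by exact_mod_cast hp : (0:ℤ) < k)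
    nlinarith [hθ.1, hθ.2]

/-- Fill in a nonnegativity condition at one circle point by continuity. -/
lemma fill_at_point (G : Polynomial ℂ) (N : ℕ) (r : ℂ) (hr : ‖r‖ = 1)
    (h : ∀ z : ℂ, ‖z‖ = 1 → z ≠ r → ∃ c : ℝ, 0 ≤ c ∧ G.eval z = z ^ N * c) :
    ∀ z : ℂ, ‖z‖ = 1 → ∃ c : ℝ, 0 ≤ c ∧ G.eval z = z ^ N * c := by
  intro z hz
  by_cases hzr : z ≠ r
  · exact h z hz hzr
  push_neg at hzr
  subst hzr
  have hz0 : z ≠ 0 := by intro h0; rw [h0] at hz; simp at hz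
  set f : ℝ → ℂ := fun θ => ((z * Complex.exp (θ * Complex.I)) ^ N)⁻¹
      * G.eval (z * Complex.exp (θ * Complex.I)) with hf
  have hcont : Continuous f := by
    apply Continuous.mul
    · apply Continuous.inv₀
      · exact ((continuous_const.mul cont_path).pow N)
      · intro θ
        exact pow_ne_zero _ (mul_ne_zero hz0 (Complex.exp_ne_zero _))
    · exact G.continuous_aeval.comp (continuous_const.mul cont_path)
  have hmem : ∀ θ ∈ Set.Ioo (0:ℝ) Real.pi, f θ ∈ {w : ℂ | w.im = 0 ∧ 0 ≤ w.re} := by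
    intro θ hθ
    obtain ⟨c, hc0, hc⟩ := h _ (path_circle z hz θ) (path_ne z hθ hz0)
    have hne : (z * Complex.exp (θ * Complex.I)) ^ N ≠ 0 :=
      pow_ne_zero _ (mul_ne_zero hz0 (Complex.exp_ne_zero _))
    have : f θ = (c : ℂ) := by
      rw [hf]; simp only
      rw [hc]
      field_simp
    rw [this]
    constructor <;> simp [hc0]
  have hlim : Filter.Tendsto f (𝓝[>] (0:ℝ)) (𝓝 (f 0)) :=
    hcont.continuousAt.tendsto.mono_left nhdsWithin_le_nhds
  have hIoo : Set.Ioo (0:ℝ) Real.pi ∈ 𝓝[>] (0:ℝ) :=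
    Ioo_mem_nhdsGT_of_mem ⟨le_refl _, Real.pi_pos⟩
  have hmem0 : f 0 ∈ {w : ℂ | w.im = 0 ∧ 0 ≤ w.re} :=
    closed_nonnegR.mem_of_tendsto hlim (Filter.eventually_of_mem hIoo hmem)
  refine ⟨(f 0).re, hmem0.2, ?_⟩
  have hzN : z ^ N ≠ 0 := pow_ne_zero _ hz0
  have hf0 : f 0 = (z ^ N)⁻¹ * G.eval z := by rw [hf]; simp
  have hfc : (f 0 : ℂ) = ((f 0).re : ℂ) := by
    apply Complex.ext <;> simp [hmem0.1]
  calc G.eval z = z ^ N * f 0 := by rw [hf0]; field_simp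
    _ = z ^ N * ((f 0).re : ℂ) := by rw [← hfc]

lemma circle_root_sq_dvd (F : Polynomial ℂ) (N : ℕ) (r : ℂ) (hr : ‖r‖ = 1)
    (hroot : F.IsRoot r)
    (H : ∀ z : ℂ, ‖z‖ = 1 → ∃ c : ℝ, 0 ≤ c ∧ F.eval z = z ^ N * c) :
    (Polynomial.X - Polynomial.C r) ^ 2 ∣ F := by
  by_cases hd : (Polynomial.X - Polynomial.C r) ^ 2 ∣ F
  · exact hd
  exfalso
  have hr0 : r ≠ 0 := by intro h0; rw [h0] at hr; simp at hr
  obtain ⟨g, hg⟩ := (Polynomial.dvd_iff_isRoot).mpr hroot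
  have hgr : g.eval r ≠ 0 := by
    intro h0
    apply hd
    obtain ⟨g', hg'⟩ := (Polynomial.dvd_iff_isRoot).mpr h0
    exact ⟨g', by rw [hg, hg']; ring⟩
  set Φ : ℝ → ℂ := fun θ => ((r * Complex.exp (θ * Complex.I)) ^ N)⁻¹
      * (r * Complex.exp ((θ/2 : ℝ) * Complex.I) * (2 * Complex.I))
      * g.eval (r * Complex.exp (θ * Complex.I)) with hΦ
  have hzne : ∀ θ : ℝ, (r * Complex.exp (θ * Complex.I)) ^ N ≠ 0 :=
    fun θ => pow_ne_zero _ (mul_ne_zero hr0 (Complex.exp_ne_zero _))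
  have hcont : Continuous Φ := by
    apply Continuous.mul
    apply Continuous.mul
    · exact Continuous.inv₀ ((continuous_const.mul cont_path).pow N) hzne
    · exact (continuous_const.mul (cont_path.comp (continuous_id.div_const 2))).mul continuous_const
    · exact g.continuous_aeval.comp (continuous_const.mul cont_path)
  have key : ∀ θ : ℝ, ∃ c : ℝ, 0 ≤ c ∧ Φ θ * (Real.sin (θ/2) : ℂ) = (c : ℂ) := by
    intro θ
    obtain ⟨c, hc0, hc⟩ := H _ (path_circle r hr θ)
    refine ⟨c, hc0, ?_⟩
    have hfac : r * Complex.exp (θ * Complex.I) - r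
        = r * Complex.exp ((θ/2 : ℝ) * Complex.I) * ((Real.sin (θ/2) : ℂ) * (2 * Complex.I)) := by
      have := exp_factor θ
      calc r * Complex.exp (θ * Complex.I) - r = r * (Complex.exp (θ * Complex.I) - 1) := by ring
        _ = _ := by rw [this]; ring
    have heval : F.eval (r * Complex.exp (θ * Complex.I))
        = (r * Complex.exp (θ * Complex.I) - r) * g.eval (r * Complex.exp (θ * Complex.I)) := by
      rw [hg]; simp
    rw [heval, hfac] at hc
    rw [hΦ]
    simp only
    have hrw : ((r * Complex.exp (θ * Complex.I)) ^ N)⁻¹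
        * (r * Complex.exp ((θ/2 : ℝ) * Complex.I) * (2 * Complex.I))
        * g.eval (r * Complex.exp (θ * Complex.I)) * (Real.sin (θ/2) : ℂ)
        = ((r * Complex.exp (θ * Complex.I)) ^ N)⁻¹
        * (r * Complex.exp ((θ/2 : ℝ) * Complex.I) * ((Real.sin (θ/2) : ℂ) * (2 * Complex.I))
            * g.eval (r * Complex.exp (θ * Complex.I))) := by ring
    rw [hrw, hc, inv_mul_cancel_left₀ (hzne θ)]
  have hpos : ∀ θ ∈ Set.Ioo (0:ℝ) Real.pi, Φ θ ∈ {w : ℂ | w.im = 0 ∧ 0 ≤ w.re} := by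
    intro θ hθ
    obtain ⟨c, hc0, hc⟩ := key θ
    have hsin : 0 < Real.sin (θ/2) :=
      Real.sin_pos_of_pos_of_lt_pi (by linarith [hθ.1]) (by linarith [hθ.2, Real.pi_pos])
    have hsin0 : ((Real.sin (θ/2) : ℝ) : ℂ) ≠ 0 := by exact_mod_cast hsin.ne'
    have hx : Φ θ = ((c / Real.sin (θ/2) : ℝ) : ℂ) := by
      rw [Complex.ofReal_div]
      exact (eq_div_iff hsin0).mpr hc
    rw [hx]
    exact ⟨Complex.ofReal_im _, by rw [Complex.ofReal_re]; positivity⟩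
  have hneg : ∀ θ ∈ Set.Ioo (-Real.pi) (0:ℝ), Φ θ ∈ {w : ℂ | w.im = 0 ∧ w.re ≤ 0} := by
    intro θ hθ
    obtain ⟨c, hc0, hc⟩ := key θ
    have hsin : Real.sin (θ/2) < 0 := by
      have := Real.sin_pos_of_pos_of_lt_pi (x := -(θ/2)) (by linarith [hθ.2]) (by linarith [hθ.1, Real.pi_pos])
      rw [Real.sin_neg] at this
      linarith
    have hsin0 : ((Real.sin (θ/2) : ℝ) : ℂ) ≠ 0 := by exact_mod_cast hsin.ne
    have hx : Φ θ = ((c / Real.sin (θ/2) : ℝ) : ℂ) := by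
      rw [Complex.ofReal_div]
      exact (eq_div_iff hsin0).mpr hc
    rw [hx]
    refine ⟨Complex.ofReal_im _, ?_⟩
    rw [Complex.ofReal_re]
    exact div_nonpos_of_nonneg_of_nonpos hc0 hsin.le
  have hlimp : Filter.Tendsto Φ (𝓝[>] (0:ℝ)) (𝓝 (Φ 0)) :=
    hcont.continuousAt.tendsto.mono_left nhdsWithin_le_nhds
  have hlimn : Filter.Tendsto Φ (𝓝[<] (0:ℝ)) (𝓝 (Φ 0)) :=
    hcont.continuousAt.tendsto.mono_left nhdsWithin_le_nhds
  have hIoo1 : Set.Ioo (0:ℝ) Real.pi ∈ 𝓝[>] (0:ℝ) :=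
    Ioo_mem_nhdsGT_of_mem ⟨le_refl _, Real.pi_pos⟩
  have hIoo2 : Set.Ioo (-Real.pi) (0:ℝ) ∈ 𝓝[<] (0:ℝ) :=
    Ioo_mem_nhdsLT_of_mem ⟨neg_neg_of_pos Real.pi_pos, le_refl _⟩
  have h1 : Φ 0 ∈ {w : ℂ | w.im = 0 ∧ 0 ≤ w.re} :=
    closed_nonnegR.mem_of_tendsto hlimp (Filter.eventually_of_mem hIoo1 hpos)
  have h2 : Φ 0 ∈ {w : ℂ | w.im = 0 ∧ w.re ≤ 0} :=
    closed_nonposR.mem_of_tendsto hlimn (Filter.eventually_of_mem hIoo2 hneg)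
  have hzero : Φ 0 = 0 := by
    apply Complex.ext
    · exact le_antisymm h2.2 h1.2
    · exact h1.1
  rw [hΦ] at hzero
  simp only [Complex.ofReal_zero, zero_mul, Complex.exp_zero, mul_one, zero_div] at hzero
  have : ((r : ℂ) ^ N)⁻¹ * (r * 1 * (2 * Complex.I)) * g.eval r ≠ 0 := by
    apply mul_ne_zero
    apply mul_ne_zero
    · exact inv_ne_zero (pow_ne_zero _ hr0)
    · apply mul_ne_zero (by simp [hr0])
      apply mul_ne_zero two_ne_zero Complex.I_ne_zero
    · exact hgr
  apply this
  convert hzero using 3 <;> simp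

-- monomial case
lemma key_monomial (N : ℕ) (F : Polynomial ℂ) (hF : F ≠ 0)
    (hall : ∀ a ∈ F.roots, a = 0)
    (H : ∀ z : ℂ, ‖z‖ = 1 → ∃ c : ℝ, 0 ≤ c ∧ F.eval z = z ^ N * c) :
    ∃ Q : Polynomial ℂ, Q.natDegree = 0 ∧
      ∀ z : ℂ, ‖z‖ = 1 →
        (((‖Q.eval z‖) ^ 2 : ℝ) : ℂ) * z ^ N = F.eval z := by
  classical
  have hsp := (IsAlgClosed.splits F).eq_prod_roots
  set t := Multiset.card F.roots with ht
  have hrepl : F.roots = Multiset.replicate t 0 := Multiset.eq_replicate_of_mem hall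
  have hFX : F = Polynomial.C F.leadingCoeff * Polynomial.X ^ t := by
    conv_lhs => rw [hsp]
    rw [hrepl, Multiset.map_replicate, Multiset.prod_replicate, map_zero, sub_zero]
  have hlc : F.leadingCoeff ≠ 0 := Polynomial.leadingCoeff_ne_zero.mpr hF
  -- value at 1
  obtain ⟨c₁, hc₁0, hc₁⟩ := H 1 (by simp)
  have hlc1 : F.leadingCoeff = (c₁ : ℂ) := by
    have := hc₁
    rw [hFX] at this
    simpa using this
  -- t = N
  have htN : t = N := by
    by_contra hne
    have hc₁pos : 0 < c₁ := lt_of_le_of_ne hc₁0 (by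
      rintro rfl
      exact hlc (by rw [hlc1]; simp))
    rcases Nat.lt_or_ge t N with hlt | hge
    · -- t < N, k = N - t
      set k := N - t with hk
      have hkpos : 0 < k := by omega
      set z₀ : ℂ := Complex.exp ((Real.pi / k : ℝ) * Complex.I) with hz₀
      have habs : ‖z₀‖ = 1 := Complex.norm_exp_ofReal_mul_I _
      have hzk : z₀ ^ k = -1 := by
        rw [hz₀, ← Complex.exp_nat_mul]
        have hk0 : (k : ℂ) ≠ 0 := Nat.cast_ne_zero.mpr hkpos.ne'
        have : (k : ℂ) * ((Real.pi / k : ℝ) * Complex.I) = (Real.pi : ℝ) * Complex.I := by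
          push_cast
          field_simp
        rw [this, Complex.exp_pi_mul_I]
      obtain ⟨c, hc0, hc⟩ := H z₀ habs
      rw [hFX] at hc
      simp only [Polynomial.eval_mul, Polynomial.eval_pow, Polynomial.eval_C,
        Polynomial.eval_X] at hc
      have hz0ne : z₀ ≠ 0 := by intro h; rw [h] at habs; simp at habs
      have hNk : z₀ ^ N = z₀ ^ t * z₀ ^ k := by rw [← pow_add]; congr 1; omega
      rw [hNk, hzk] at hc
      have hcan : F.leadingCoeff = -(c : ℂ) := by
        have h3 : (F.leadingCoeff - -(c:ℂ)) * z₀ ^ t = 0 := by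
          linear_combination hc
        rcases mul_eq_zero.mp h3 with h4 | h4
        · exact sub_eq_zero.mp h4
        · exact absurd h4 (pow_ne_zero _ hz0ne)
      rw [hlc1] at hcan
      have : c₁ = -c := by exact_mod_cast hcan
      linarith
    · -- t ≥ N, and t ≠ N so t > N, k = t - N
      set k := t - N with hk
      have hkpos : 0 < k := by omega
      set z₀ : ℂ := Complex.exp ((Real.pi / k : ℝ) * Complex.I) with hz₀
      have habs : ‖z₀‖ = 1 := Complex.norm_exp_ofReal_mul_I _
      have hzk : z₀ ^ k = -1 := by
        rw [hz₀, ← Complex.exp_nat_mul]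
        have hk0 : (k : ℂ) ≠ 0 := Nat.cast_ne_zero.mpr hkpos.ne'
        have : (k : ℂ) * ((Real.pi / k : ℝ) * Complex.I) = (Real.pi : ℝ) * Complex.I := by
          push_cast
          field_simp
        rw [this, Complex.exp_pi_mul_I]
      obtain ⟨c, hc0, hc⟩ := H z₀ habs
      rw [hFX] at hc
      simp only [Polynomial.eval_mul, Polynomial.eval_pow, Polynomial.eval_C,
        Polynomial.eval_X] at hc
      have hz0ne : z₀ ≠ 0 := by intro h; rw [h] at habs; simp at habs
      have hNk : z₀ ^ t = z₀ ^ N * z₀ ^ k := by rw [← pow_add]; congr 1; omega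
      rw [hNk, hzk] at hc
      have hcan : F.leadingCoeff * -1 = (c : ℂ) := by
        have h3 : (F.leadingCoeff * -1 - (c:ℂ)) * z₀ ^ N = 0 := by
          linear_combination hc
        rcases mul_eq_zero.mp h3 with h4 | h4
        · exact sub_eq_zero.mp h4
        · exact absurd h4 (pow_ne_zero _ hz0ne)
      rw [hlc1] at hcan
      have : c₁ * (-1) = c := by exact_mod_cast hcan
      linarith
  refine ⟨Polynomial.C ((Real.sqrt c₁ : ℝ) : ℂ), by simp, fun z hz => ?_⟩
  have : ‖((Real.sqrt c₁ : ℝ) : ℂ)‖ ^ 2 = c₁ := by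
    rw [Complex.norm_real, Real.norm_eq_abs, _root_.abs_of_nonneg (Real.sqrt_nonneg _), Real.sq_sqrt hc₁0]
  rw [Polynomial.eval_C, this, hFX, htN]
  rw [Polynomial.eval_mul, Polynomial.eval_pow, Polynomial.eval_C, Polynomial.eval_X, hlc1,
    mul_comm]


lemma key : ∀ (n : ℕ) (F : Polynomial ℂ), F.natDegree ≤ 2*n →
    (∀ z : ℂ, ‖z‖ = 1 → ∃ c : ℝ, 0 ≤ c ∧ F.eval z = z ^ n * c) →
    ∃ Q : Polynomial ℂ, Q.natDegree ≤ n ∧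
      ∀ z : ℂ, ‖z‖ = 1 →
        (((‖Q.eval z‖) ^ 2 : ℝ) : ℂ) * z ^ n = F.eval z := by
  intro n
  induction n with
  | zero =>
    intro F hdeg H
    by_cases hF : F = 0
    · exact ⟨0, by simp, fun z hz => by simp [hF]⟩
    obtain ⟨Q, hQ0, hQ⟩ := key_monomial 0 F hF (fun a ha => by
      by_contra hane
      have hC := Polynomial.eq_C_of_natDegree_le_zero (le_trans hdeg (by norm_num))
      have ha2 : F.IsRoot a := (Polynomial.mem_roots hF).mp ha
      rw [Polynomial.IsRoot, hC] at ha2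
      simp only [Polynomial.eval_C] at ha2
      exact hF (by rw [hC, ha2, map_zero])) H
    exact ⟨Q, le_of_eq hQ0 |>.trans (by norm_num), hQ⟩
  | succ n IH =>
    intro F hdeg H
    by_cases hF : F = 0
    · exact ⟨0, by simp, fun z hz => by simp [hF]⟩
    by_cases hroot : ∃ r : ℂ, r ≠ 0 ∧ F.IsRoot r
    · obtain ⟨r, hr0, hrr⟩ := hroot
      set s : ℂ := ((starRingEnd ℂ) r)⁻¹ with hs
      have hs0 : s ≠ 0 := by simp [hs, hr0]
      have hcr0 : (starRingEnd ℂ) r ≠ 0 := by simpa using hr0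
      have hsr : s * (starRingEnd ℂ) r = 1 := by
        rw [hs]
        exact inv_mul_cancel₀ hcr0
      -- divisibility by (X - C r) * (X - C s)
      have hD : (Polynomial.X - Polynomial.C r) * (Polynomial.X - Polynomial.C s) ∣ F := by
        by_cases habs : ‖r‖ = 1
        · have hsr' : s = r := by
            rw [hs, conj_eq_inv habs, inv_inv]
          rw [hsr', ← sq]
          exact circle_root_sq_dvd F (n+1) r habs hrr H
        · -- r not on circle: s ≠ r and s is also a root via symmetry
          have hsne : s ≠ r := by
            intro h
            apply habs
            have h2 : r * (starRingEnd ℂ) r = 1 := by rw [← h]; rw [h] at hsr ⊢; exact hsr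
            have h3 : (‖r‖)^2 = 1 := by
              have := congrArg (‖·‖) h2
              rwa [norm_mul, Complex.norm_conj, ← sq, norm_one] at this
            nlinarith [norm_nonneg r]
          have hFsym : F = starpoly (2*(n+1)) F := by
            apply Polynomial.eq_of_infinite_eval_eq
            apply Set.Infinite.mono _ circle_infinite
            intro z hz
            simp only [Set.mem_setOf_eq] at hz ⊢
            obtain ⟨c, hc0, hc⟩ := H z hz
            rw [starpoly_eval_circle hdeg hz, hc]
            rw [map_mul, map_pow, Complex.conj_ofReal, conj_eq_inv hz]
            have hz0 : z ≠ 0 := by intro h; rw [h] at hz; simp at hz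
            field_simp
            rw [one_div, inv_pow, two_mul, pow_add z (n+1) (n+1), mul_assoc, mul_inv_cancel_right₀ (pow_ne_zero _ hz0), mul_comm]
          have hsroot : F.IsRoot s := by
            have := starpoly_root hdeg hr0 hrr
            rw [Polynomial.IsRoot, hFsym, hs]
            exact this
          have hcop : IsCoprime (Polynomial.X - Polynomial.C r) (Polynomial.X - Polynomial.C s) :=
            Polynomial.isCoprime_X_sub_C_of_isUnit_sub (sub_ne_zero_of_ne fun h => hsne (h.symm)).isUnit
          exact IsCoprime.mul_dvd hcop (Polynomial.dvd_iff_isRoot.mpr hrr)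
            (Polynomial.dvd_iff_isRoot.mpr hsroot)
      obtain ⟨F₁, hF₁⟩ := hD
      have hF₁ne : F₁ ≠ 0 := by
        intro h
        rw [h, mul_zero] at hF₁
        exact hF hF₁
      have hDne : (Polynomial.X - Polynomial.C r) * (Polynomial.X - Polynomial.C s) ≠ 0 :=
        mul_ne_zero (Polynomial.X_sub_C_ne_zero r) (Polynomial.X_sub_C_ne_zero s)
      have hdegD : ((Polynomial.X - Polynomial.C r) * (Polynomial.X - Polynomial.C s)).natDegree = 2 := by
        rw [Polynomial.natDegree_mul (Polynomial.X_sub_C_ne_zero r) (Polynomial.X_sub_C_ne_zero s),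
          Polynomial.natDegree_X_sub_C, Polynomial.natDegree_X_sub_C]
      have hdegF₁ : F₁.natDegree ≤ 2*n := by
        have := Polynomial.natDegree_mul hDne hF₁ne
        rw [← hF₁, hdegD] at this
        omega
      -- the complementary factor
      set F₂ : Polynomial ℂ := Polynomial.C (-r) * F₁ with hF₂def
      have hdegF₂ : F₂.natDegree ≤ 2*n :=
        le_trans (Polynomial.natDegree_C_mul_le _ _) hdegF₁
      have hzs_ne : ∀ z : ℂ, ‖z‖ = 1 → z ≠ r → z ≠ s := by
        intro z hz hzr h
        apply hzr
        have habs_s : ‖s‖ = 1 := h ▸ hz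
        have habs_r : ‖r‖ = 1 := by
          rw [hs] at habs_s
          rw [norm_inv, Complex.norm_conj] at habs_s
          exact inv_eq_one.mp habs_s
        rw [h, hs, conj_eq_inv habs_r, inv_inv]
      have hid : ∀ z : ℂ, ‖z‖ = 1 →
          (z - r) * (z - s) = (-s) * z * ((z - r) * (starRingEnd ℂ) (z - r)) := by
        intro z hz
        have h1 : z * (starRingEnd ℂ) z = 1 := by
          rw [Complex.mul_conj]
          norm_cast
          rw [← Complex.sq_norm, hz]; norm_num
        rw [map_sub]
        linear_combination (s*(z-r)) * h1 + (-(z*(z-r))) * hsr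
      have H₂' : ∀ z : ℂ, ‖z‖ = 1 → z ≠ r →
          ∃ c : ℝ, 0 ≤ c ∧ F₂.eval z = z ^ n * c := by
        intro z hz hzr
        obtain ⟨c, hc0, hc⟩ := H z hz
        have hz0 : z ≠ 0 := by intro h; rw [h] at hz; simp at hz
        have hw0 : z - r ≠ 0 := sub_ne_zero_of_ne hzr
        have hws0 : z - s ≠ 0 := sub_ne_zero_of_ne (hzs_ne z hz hzr)
        have hwpos : 0 < Complex.normSq (z - r) := Complex.normSq_pos.mpr hw0
        refine ⟨c * Complex.normSq r / Complex.normSq (z - r),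
          div_nonneg (mul_nonneg hc0 (Complex.normSq_nonneg _)) (Complex.normSq_nonneg _), ?_⟩
        have heval : F.eval z = (z - r) * (z - s) * F₁.eval z := by
          rw [hF₁]; simp
        have hF₁z : F₁.eval z * ((z - r) * (z - s)) = z^(n+1) * c := by
          rw [← hc, heval]; ring
        have hns : ((Complex.normSq (z-r) : ℝ) : ℂ) = (z - r) * (starRingEnd ℂ) (z - r) :=
          (Complex.mul_conj _).symm
        have hnr : ((Complex.normSq r : ℝ) : ℂ) = r * (starRingEnd ℂ) r :=
          (Complex.mul_conj _).symm
        have hid2 : (z - r) * (z - s) = (-s) * z * ((Complex.normSq (z-r) : ℝ) : ℂ) := by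
          rw [hns]; exact hid z hz
        rw [hF₂def]
        simp only [Polynomial.eval_mul, Polynomial.eval_C]
        have hnsne : ((Complex.normSq (z-r) : ℝ) : ℂ) ≠ 0 := by
          exact_mod_cast hwpos.ne'
        push_cast
        rw [hnr]
        rw [← mul_div_assoc, eq_div_iff hnsne]
        -- goal : -r * F₁.eval z = z ^ n * (c * (r * conj r)) / nsq  --- after div_eq_iff:
        -- (-r * F₁.eval z) * nsq = z^n * (c * (r * conj r))
        rw [hid2] at hF₁z
        -- hF₁z : F₁ z * ((-s) * z * nsq) = z^(n+1) * c
        have hgoal : (-r * Polynomial.eval z F₁ * ((Complex.normSq (z-r) : ℝ) : ℂ)) * (s * z)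
            = (z ^ n * ((c : ℂ) * (r * (starRingEnd ℂ) r))) * (s * z) := by
          calc (-r * Polynomial.eval z F₁ * ((Complex.normSq (z-r) : ℝ) : ℂ)) * (s * z)
              = r * (Polynomial.eval z F₁ * (-s * z * ((Complex.normSq (z-r) : ℝ) : ℂ))) := by
                ring
            _ = r * (z ^ (n+1) * (c : ℂ)) := by rw [hF₁z]
            _ = (z ^ n * ((c : ℂ) * (r * (starRingEnd ℂ) r))) * (s * z) := by
                rw [pow_succ]
                linear_combination (-(r * z^n * z * (c:ℂ))) * hsr
        exact mul_right_cancel₀ (mul_ne_zero hs0 hz0) hgoal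
      have H₂ : ∀ z : ℂ, ‖z‖ = 1 → ∃ c : ℝ, 0 ≤ c ∧ F₂.eval z = z ^ n * c := by
        by_cases habs : ‖r‖ = 1
        · exact fill_at_point F₂ n r habs H₂'
        · intro z hz
          exact H₂' z hz (fun h => habs (h ▸ hz))
      obtain ⟨Q₁, hQ₁deg, hQ₁⟩ := IH F₂ hdegF₂ H₂
      refine ⟨Polynomial.C ((((‖r‖)⁻¹ : ℝ)) : ℂ) * ((Polynomial.X - Polynomial.C r) * Q₁), ?_, ?_⟩
      · refine le_trans (Polynomial.natDegree_C_mul_le _ _) ?_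
        refine le_trans (Polynomial.natDegree_mul_le) ?_
        rw [Polynomial.natDegree_X_sub_C]
        omega
      · intro z hz
        have hz0 : z ≠ 0 := by intro h; rw [h] at hz; simp at hz
        have habsr : 0 < ‖r‖ := by
          simpa using norm_pos_iff.mpr hr0
        have habsQ : (‖Polynomial.eval z
              (Polynomial.C ((((‖r‖)⁻¹ : ℝ)) : ℂ)
                * ((Polynomial.X - Polynomial.C r) * Q₁))‖) ^ 2
            = ((‖r‖)⁻¹)^2 * (Complex.normSq (z - r))
              * (‖Q₁.eval z‖)^2 := by
          simp only [Polynomial.eval_mul, Polynomial.eval_sub, Polynomial.eval_X,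
            Polynomial.eval_C, norm_mul]
          rw [Complex.norm_real, Real.norm_eq_abs, _root_.abs_of_nonneg (by positivity : (0:ℝ) ≤ (‖r‖)⁻¹)]
          rw [← Complex.sq_norm (z - r)]
          ring
        rw [habsQ]
        have heval : F.eval z = (z - r) * (z - s) * F₁.eval z := by
          rw [hF₁]; simp
        have hns : ((Complex.normSq (z-r) : ℝ) : ℂ) = (z - r) * (starRingEnd ℂ) (z - r) :=
          (Complex.mul_conj _).symm
        have hnr : ((Complex.normSq r : ℝ) : ℂ) = r * (starRingEnd ℂ) r :=
          (Complex.mul_conj _).symm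
        have hid2 : (z - r) * (z - s) = (-s) * z * ((Complex.normSq (z-r) : ℝ) : ℂ) := by
          rw [hns]; exact hid z hz
        have hQz := hQ₁ z hz
        rw [hF₂def] at hQz
        simp only [Polynomial.eval_mul, Polynomial.eval_C] at hQz
        -- hQz : ↑(abs (Q₁ z)^2) * z^n = -r * F₁ z
        have habs2 : (((‖r‖)⁻¹)^2 : ℝ) = (Complex.normSq r)⁻¹ := by
          rw [← Complex.sq_norm]
          rw [inv_pow]
        have hnr0 : ((Complex.normSq r : ℝ) : ℂ) ≠ 0 := by
          have := Complex.normSq_pos.mpr hr0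
          exact_mod_cast this.ne'
        rw [heval, hid2]
        push_cast [habs2]
        -- goal: (normSq r)⁻¹ * normSq(z-r) * (abs(Q₁ z))^2 * z^(n+1) = -s * z * normSq(z-r) * F₁ z
        calc ((Complex.normSq r : ℝ) : ℂ)⁻¹ * ((Complex.normSq (z-r) : ℝ) : ℂ)
              * ((‖Q₁.eval z‖ : ℝ) : ℂ)^2 * z ^ (n+1)
            = ((Complex.normSq r : ℝ) : ℂ)⁻¹ * ((Complex.normSq (z-r) : ℝ) : ℂ) * z
              * (((‖Q₁.eval z‖ : ℝ) : ℂ)^2 * z ^ n) := by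
              rw [pow_succ]; ring
          _ = ((Complex.normSq r : ℝ) : ℂ)⁻¹ * ((Complex.normSq (z-r) : ℝ) : ℂ) * z
              * (-r * F₁.eval z) := by
              rw [← hQz]
              push_cast
              ring
          _ = -s * z * ((Complex.normSq (z-r) : ℝ) : ℂ) * F₁.eval z := by
              rw [hnr]
              have : ((r : ℂ) * (starRingEnd ℂ) r)⁻¹ * (-r) = -s := by
                have h2 : (starRingEnd ℂ) r ≠ 0 := by simpa using hr0
                rw [hs]
                field_simp
              calc ((r : ℂ) * (starRingEnd ℂ) r)⁻¹ * ((Complex.normSq (z-r) : ℝ) : ℂ) * z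
                    * (-r * F₁.eval z)
                  = (((r : ℂ) * (starRingEnd ℂ) r)⁻¹ * (-r)) * z
                    * ((Complex.normSq (z-r) : ℝ) : ℂ) * F₁.eval z := by ring
                _ = -s * z * ((Complex.normSq (z-r) : ℝ) : ℂ) * F₁.eval z := by rw [this]
    · -- no nonzero root : monomial case
      obtain ⟨Q, hQ0, hQ⟩ := key_monomial (n+1) F hF (fun a ha => by
        by_contra hane
        exact hroot ⟨a, hane, (Polynomial.mem_roots hF).mp ha⟩) H
      exact ⟨Q, le_of_eq hQ0 |>.trans (by omega), hQ⟩

/-- Fejér–Riesz / complementary polynomial: if `P` is a complex polynomial of degree at most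
`n` with `|P(z)| ≤ 1` on the unit circle, then there is a polynomial `Q` of degree at most `n`
with `|P(z)|² + |Q(z)|² = 1` on the unit circle. -/
theorem fejer_riesz_complementary
    (n : ℕ) (P : Polynomial ℂ) (hdeg : P.natDegree ≤ n)
    (hP : ∀ z : ℂ, ‖z‖ = 1 → ‖P.eval z‖ ≤ 1) :
    ∃ Q : Polynomial ℂ, Q.natDegree ≤ n ∧
      ∀ z : ℂ, ‖z‖ = 1 →
        ‖P.eval z‖ ^ 2 + ‖Q.eval z‖ ^ 2 = 1 := by
  set F : Polynomial ℂ := Polynomial.X ^ n - P * starpoly n P with hFdef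
  have hdegF : F.natDegree ≤ 2*n := by
    refine le_trans (Polynomial.natDegree_sub_le _ _) ?_
    rw [max_le_iff]
    constructor
    · rw [Polynomial.natDegree_X_pow]; omega
    · refine le_trans Polynomial.natDegree_mul_le ?_
      have := starpoly_natDegree_le n P
      omega
  have hFcompute : ∀ z : ℂ, ‖z‖ = 1 →
      F.eval z = z ^ n * (((1 - (‖P.eval z‖)^2 : ℝ)) : ℂ) := by
    intro z hz
    rw [hFdef]
    simp only [Polynomial.eval_sub, Polynomial.eval_pow, Polynomial.eval_X, Polynomial.eval_mul]
    rw [starpoly_eval_circle hdeg hz]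
    have habs : (((‖P.eval z‖)^2 : ℝ) : ℂ) = P.eval z * (starRingEnd ℂ) (P.eval z) := by
      rw [Complex.sq_norm, Complex.mul_conj]
    rw [Complex.ofReal_sub, Complex.ofReal_one, habs]
    ring
  have HF : ∀ z : ℂ, ‖z‖ = 1 → ∃ c : ℝ, 0 ≤ c ∧ F.eval z = z ^ n * c := by
    intro z hz
    refine ⟨1 - (‖P.eval z‖)^2, ?_, hFcompute z hz⟩
    have h1 := hP z hz
    nlinarith [norm_nonneg (P.eval z)]
  obtain ⟨Q, hQdeg, hQ⟩ := key n F hdegF HF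
  refine ⟨Q, hQdeg, fun z hz => ?_⟩
  have hz0 : z ≠ 0 := by intro h; rw [h] at hz; simp at hz
  have h1 := hQ z hz
  rw [hFcompute z hz] at h1
  have h2 : (((‖Q.eval z‖)^2 : ℝ) : ℂ)
      = (((1 - (‖P.eval z‖)^2 : ℝ)) : ℂ) := by
    have hzn : (z : ℂ) ^ n ≠ 0 := pow_ne_zero _ hz0
    refine mul_right_cancel₀ hzn ?_
    rw [h1]
    ring
  have h3 : (‖Q.eval z‖)^2 = 1 - (‖P.eval z‖)^2 := by
    exact_mod_cast h2
  linarith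
end

section
/- Let (v_k)_{k∈ℤ^m} be vectors in a complex Hilbert space H with Σ_{k∈ℤ^m} ‖v_k‖² < ∞, and let Π₁,…,Π_m be orthogonal projections on H with Σ_j Π_j = Id. Suppose there exists k' ∈ ℤ^m with v_{k'} ≠ 0 such that for every s ≥ 1 and every h ∈ k' + L_s (where L_s = {h ∈ ℤ_{≥0}^m : Σ_j h_j = s}), one has ‖v_h‖² = Σ_{j=1}^m ‖Π_j v_{h−e_j}‖². Then a contradiction follows; i.e., no such family exists. -/
open scoped InnerProductSpace

/-- No square-summable family `(v_k)_{k ∈ ℤ^m}` in a complex Hilbert space, together with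
orthogonal projections `Π_1, …, Π_m` summing to the identity, can satisfy
`‖v_h‖² = Σ_j ‖Π_j v_{h−e_j}‖²` for every `h ∈ k' + L_s` (`s ≥ 1`) while `v_{k'} ≠ 0`. -/
theorem no_multivariate_divergent_family
    {H : Type*} [NormedAddCommGroup H] [InnerProductSpace ℂ H] [CompleteSpace H]
    (m : ℕ) (hm : 1 ≤ m)
    (v : (Fin m → ℤ) → H)
    (hsum : Summable fun k : Fin m → ℤ => ‖v k‖ ^ 2)
    (P : Fin m → (H →L[ℂ] H))
    (hsa : ∀ j, IsSelfAdjoint (P j))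
    (hidem : ∀ j, (P j).comp (P j) = P j)
    (hsumP : ∑ j, P j = 1)
    (k' : Fin m → ℤ) (hk' : v k' ≠ 0)
    (hrec : ∀ (s : ℕ), 1 ≤ s → ∀ h : Fin m → ℤ,
      (∀ j, 0 ≤ h j) → (∑ j, h j) = (s : ℤ) →
      ‖v (k' + h)‖ ^ 2 = ∑ j, ‖P j (v (k' + h - Pi.single j 1))‖ ^ 2) :
    False := by
  classical
  -- Key: the projections preserve the squared norm in total.
  have key : ∀ x : H, (∑ j, ‖P j x‖ ^ 2) = ‖x‖ ^ 2 := by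
    intro x
    have h1 : ∀ j, ‖P j x‖ ^ 2 = RCLike.re ⟪x, P j x⟫_ℂ := by
      intro j
      have hPP : P j (P j x) = P j x := by
        have := congrArg (fun T : H →L[ℂ] H => T x) (hidem j)
        simpa using this
      have h : ⟪(ContinuousLinearMap.adjoint (P j)) x, P j x⟫_ℂ = ⟪x, P j (P j x)⟫_ℂ :=
        ContinuousLinearMap.adjoint_inner_left (P j) (P j x) x
      rw [(hsa j).adjoint_eq, hPP] at h
      rw [← inner_self_eq_norm_sq (𝕜 := ℂ), h]
    calc ∑ j, ‖P j x‖ ^ 2 = ∑ j, RCLike.re ⟪x, P j x⟫_ℂ := by simp_rw [h1]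
      _ = RCLike.re (∑ j, ⟪x, P j x⟫_ℂ) := (map_sum _ _ _).symm
      _ = RCLike.re ⟪x, (∑ j, P j) x⟫_ℂ := by
          rw [← inner_sum, ContinuousLinearMap.sum_apply]
      _ = ‖x‖ ^ 2 := by rw [hsumP]; simpa using inner_self_eq_norm_sq (𝕜 := ℂ) x
  -- Cast of nonnegative tuples into ℤ-tuples.
  set c : (Fin m → ℕ) → (Fin m → ℤ) := fun h j => (h j : ℤ) with hc
  have hcinj : Function.Injective c := by
    intro h h' hh
    funext i
    exact Nat.cast_injective (congrFun hh i)
  have hcsingle : ∀ j : Fin m, c (Pi.single j 1) = Pi.single j 1 := by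
    intro j
    funext i
    rcases eq_or_ne i j with rfl | hne
    · simp [hc]
    · simp [hc, Pi.single_apply, hne]
  have hcadd : ∀ g h : Fin m → ℕ, c (g + h) = c g + c h := by
    intro g h; funext i; simp [hc]
  set A : ℕ → Finset (Fin m → ℕ) := fun s => Finset.Nat.antidiagonalTuple m s with hA
  set a : ℕ → ℝ := fun s => ∑ h ∈ A s, ‖v (k' + c h)‖ ^ 2 with ha
  have ha0 : a 0 = ‖v k'‖ ^ 2 := by
    have : A 0 = {0} := Finset.Nat.antidiagonalTuple_zero_right m
    rw [ha]
    simp only [this, Finset.sum_singleton]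
    have : c 0 = 0 := by funext i; simp [hc]
    rw [this, add_zero]
  -- monotonicity step
  have hstep : ∀ s : ℕ, a s ≤ a (s + 1) := by
    intro s
    have hrw : a (s + 1) =
        ∑ p ∈ (A (s + 1)) ×ˢ (Finset.univ : Finset (Fin m)),
          ‖P p.2 (v (k' + c p.1 - Pi.single p.2 1))‖ ^ 2 := by
      rw [ha, Finset.sum_product]
      refine Finset.sum_congr rfl fun h hh => ?_
      have hmem : ∑ i, h i = s + 1 := (Finset.Nat.mem_antidiagonalTuple).mp hh
      exact hrec (s + 1) (Nat.succ_le_succ (Nat.zero_le s)) (c h)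
        (fun j => by positivity)
        (by rw [← Nat.cast_sum]; exact_mod_cast congrArg (Nat.cast : ℕ → ℤ) hmem)
    have hrwL : a s =
        ∑ p ∈ (A s) ×ˢ (Finset.univ : Finset (Fin m)),
          ‖P p.2 (v (k' + c (p.1 + Pi.single p.2 1) - Pi.single p.2 1))‖ ^ 2 := by
      rw [ha, Finset.sum_product]
      refine Finset.sum_congr rfl fun g _ => ?_
      rw [← key (v (k' + c g))]
      refine Finset.sum_congr rfl fun j _ => ?_
      congr 2
      rw [hcadd, hcsingle]
      abel
    rw [hrw, hrwL]
    set φ : (Fin m → ℕ) × Fin m → (Fin m → ℕ) × Fin m :=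
      fun p => (p.1 + Pi.single p.2 1, p.2) with hφ
    have hφinj : ∀ p ∈ (A s) ×ˢ (Finset.univ : Finset (Fin m)),
        ∀ q ∈ (A s) ×ˢ (Finset.univ : Finset (Fin m)), φ p = φ q → p = q := by
      intro p _ q _ hpq
      simp only [hφ, Prod.mk.injEq] at hpq
      obtain ⟨h1, h2⟩ := hpq
      rw [h2] at h1
      have : p.1 = q.1 := by
        funext i
        have := congrFun h1 i
        simpa using Nat.add_right_cancel this
      exact Prod.ext this h2
    have himg : ((A s) ×ˢ (Finset.univ : Finset (Fin m))).image φ ⊆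
        (A (s + 1)) ×ˢ (Finset.univ : Finset (Fin m)) := by
      intro q hq
      rcases Finset.mem_image.mp hq with ⟨p, hp, rfl⟩
      rcases Finset.mem_product.mp hp with ⟨hp1, _⟩
      refine Finset.mem_product.mpr ⟨?_, Finset.mem_univ _⟩
      rw [hA, Finset.Nat.mem_antidiagonalTuple]
      have hsum1 : ∑ i, p.1 i = s := (Finset.Nat.mem_antidiagonalTuple).mp hp1
      simp [hφ, Finset.sum_add_distrib, hsum1]
    calc ∑ p ∈ (A s) ×ˢ (Finset.univ : Finset (Fin m)),
          ‖P p.2 (v (k' + c (p.1 + Pi.single p.2 1) - Pi.single p.2 1))‖ ^ 2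
        = ∑ q ∈ ((A s) ×ˢ (Finset.univ : Finset (Fin m))).image φ,
            ‖P q.2 (v (k' + c q.1 - Pi.single q.2 1))‖ ^ 2 := by
          rw [Finset.sum_image hφinj]
      _ ≤ ∑ q ∈ (A (s + 1)) ×ˢ (Finset.univ : Finset (Fin m)),
            ‖P q.2 (v (k' + c q.1 - Pi.single q.2 1))‖ ^ 2 :=
          Finset.sum_le_sum_of_subset_of_nonneg himg (fun q _ _ => by positivity)
  have hlow : ∀ s, ‖v k'‖ ^ 2 ≤ a s := by
    intro s
    induction s with
    | zero => rw [ha0]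
    | succ n ih => exact ih.trans (hstep n)
  -- The translated antidiagonal finsets in ℤ^m.
  set T : ℕ → Finset (Fin m → ℤ) := fun s => (A s).image (fun h => k' + c h) with hT
  have hTsum : ∀ s, ∑ k ∈ T s, ‖v k‖ ^ 2 = a s := by
    intro s
    rw [hT, Finset.sum_image]
    intro h _ h' _ hh
    exact hcinj (add_left_cancel hh)
  have hTdisj : ∀ s t : ℕ, s ≠ t → Disjoint (T s) (T t) := by
    intro s t hst
    refine Finset.disjoint_left.mpr fun k hks hkt => ?_
    rcases Finset.mem_image.mp hks with ⟨h, hh, rfl⟩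
    rcases Finset.mem_image.mp hkt with ⟨h', hh', heq⟩
    have : h = h' := hcinj (add_left_cancel heq.symm)
    subst this
    exact hst (((Finset.Nat.mem_antidiagonalTuple).mp hh).symm.trans
      ((Finset.Nat.mem_antidiagonalTuple).mp hh'))
  have hbound : ∀ N : ℕ, (N : ℝ) * ‖v k'‖ ^ 2 ≤ ∑' k, ‖v k‖ ^ 2 := by
    intro N
    have hdisjU : ∀ s ∈ Finset.range N, ∀ t ∈ Finset.range N, s ≠ t →
        Disjoint (T s) (T t) := fun s _ t _ hst => hTdisj s t hst
    have h1 : ∑ s ∈ Finset.range N, a s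
        = ∑ k ∈ (Finset.range N).biUnion T, ‖v k‖ ^ 2 := by
      rw [Finset.sum_biUnion hdisjU]
      exact Finset.sum_congr rfl fun s _ => (hTsum s).symm
    have h2 : ∑ k ∈ (Finset.range N).biUnion T, ‖v k‖ ^ 2 ≤ ∑' k, ‖v k‖ ^ 2 :=
      Summable.sum_le_tsum _ (fun k _ => by positivity) hsum
    calc (N : ℝ) * ‖v k'‖ ^ 2 = ∑ _s ∈ Finset.range N, ‖v k'‖ ^ 2 := by
          rw [Finset.sum_const, Finset.card_range, nsmul_eq_mul]
      _ ≤ ∑ s ∈ Finset.range N, a s := Finset.sum_le_sum fun s _ => hlow s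
      _ ≤ ∑' k, ‖v k‖ ^ 2 := h1 ▸ h2
  have hcpos : (0 : ℝ) < ‖v k'‖ ^ 2 := pow_pos (norm_pos_iff.mpr hk') 2
  obtain ⟨N, hN⟩ := exists_nat_gt ((∑' k, ‖v k‖ ^ 2) / ‖v k'‖ ^ 2)
  have : (∑' k, ‖v k‖ ^ 2) < (N : ℝ) * ‖v k'‖ ^ 2 := by
    rwa [div_lt_iff₀ hcpos] at hN
  exact absurd (hbound N) (not_le.mpr this)
end

section
/- Let τ(z) = Σ_{k=0}^n τ_k z^k with coefficients τ_k ∈ ℂ^N, satisfying ‖τ(z)‖ = 1 for all z ∈ 𝕋, and with ⟨τ_0, τ_n⟩ = 0 and τ_n ≠ 0, τ_0 ≠ 0. Then there exists a unitary A ∈ U(N) such that A† τ_n is supported on the first coordinate and A† τ_0 is orthogonal to the first coordinate; consequently, writing A† τ(z) = P'(z) e₀ + ρ(z) with ⟨e₀, ρ(z)⟩ = 0, the scalar polynomial P'(z) has zero constant term (so diag(z^{-1}, 1, …, 1) A† τ(z) is a polynomial of degree ≤ n − 1). -/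
open Matrix

local notation "⟪" x ", " y "⟫" => @inner ℂ _ _ x y

/-- Single layer-stripping step for QSP over `SU(N)`: if `τ(z) = Σ_{k=0}^n τ_k z^k` is a
polynomial state (`‖τ(z)‖ = 1` on the circle) with `⟪τ_0, τ_n⟫ = 0`, `τ_0 ≠ 0`, `τ_n ≠ 0`,
then there is a unitary `A ∈ U(N)` such that `A† τ_n` is supported on the first coordinate
and `A† τ_0` vanishes on the first coordinate; writing `A† τ(z) = P'(z) e₀ + ρ(z)` with
`⟪e₀, ρ(z)⟫ = 0`, the scalar polynomial `P'` has zero constant term. -/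
theorem qsp_layer_stripping_step
    (N n : ℕ) [NeZero N]
    (τ : ℕ → EuclideanSpace ℂ (Fin N))
    (hsupp : ∀ k, n < k → τ k = 0)
    (hnorm : ∀ z : ℂ, ‖z‖ = 1 → ‖∑ k ∈ Finset.range (n + 1), z ^ k • τ k‖ = 1)
    (horth : ⟪τ 0, τ n⟫ = 0)
    (h0 : τ 0 ≠ 0) (hn : τ n ≠ 0) :
    ∃ A ∈ Matrix.unitaryGroup (Fin N) ℂ,
      (∀ i : Fin N, i ≠ 0 → Aᴴ.mulVec (fun j => τ n j) i = 0) ∧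
      Aᴴ.mulVec (fun j => τ 0 j) 0 = 0 := by
  have hτn : ‖τ n‖ ≠ 0 := norm_ne_zero_iff.mpr hn
  set u : EuclideanSpace ℂ (Fin N) := ((‖τ n‖ : ℂ))⁻¹ • τ n with hu
  have hun : ‖u‖ = 1 := by
    rw [hu, norm_smul]
    simp [hτn]
  have hortho : Orthonormal ℂ (({0} : Set (Fin N)).restrict (fun _ : Fin N => u)) := by
    refine ⟨fun i => hun, ?_⟩
    intro i j hij
    exact absurd (Subtype.ext (i.2.trans j.2.symm)) hij
  obtain ⟨b, hb⟩ := hortho.exists_orthonormalBasis_extension_of_card_eq (by simp)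
  have hb0 : b 0 = u := hb 0 rfl
  refine ⟨Matrix.of fun i j => b j i, ?_, ?_, ?_⟩
  · rw [Matrix.mem_unitaryGroup_iff']
    ext i j
    have := orthonormal_iff_ite.mp b.orthonormal i j
    simp only [PiLp.inner_apply, RCLike.inner_apply] at this
    simpa [Matrix.mul_apply, Matrix.conjTranspose_apply, Matrix.one_apply, mul_comm] using this
  · intro i hi
    have hiz : ⟪b i, b 0⟫ = 0 := b.orthonormal.2 hi
    have : ⟪b i, τ n⟫ = 0 := by
      have hτ : τ n = (‖τ n‖ : ℂ) • b 0 := by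
        rw [hb0, hu, smul_smul, mul_inv_cancel₀ (by exact_mod_cast hτn), one_smul]
      rw [hτ, inner_smul_right, hiz, mul_zero]
    simpa [Matrix.mulVec, dotProduct, Matrix.conjTranspose_apply,
      PiLp.inner_apply, RCLike.inner_apply, mul_comm] using this
  · have : ⟪b 0, τ 0⟫ = 0 := by
      have h1 : ⟪τ 0, b 0⟫ = 0 := by
        rw [hb0, hu, inner_smul_right, horth, mul_zero]
      exact inner_eq_zero_symm.mpr h1
    simpa [Matrix.mulVec, dotProduct, Matrix.conjTranspose_apply,
      PiLp.inner_apply, RCLike.inner_apply, mul_comm] using this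
end
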